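/- The function g(z) = ln(log₂(1+e^z)) is strictly concave on (-∞, 0); equivalently, its second derivative is negative for all z < 0 (the second derivative is a positive multiple of ln(1+e^z) − 1, which is negative for z < 0). -/

import Mathlib

/-!
Up to the additive constant `-log (log 2)`, `g = log ∘ L` with `L z = log (1 + e^z)`. Since
`L' = e^z / (1 + e^z)` and `L'' = e^z / (1 + e^z)^2`,
`g'' = (L'' L - L'^2) / L^2 = e^z (L - e^z) / ((1 + e^z)^2 L^2)`,
which is negative because `log (1 + x) < x` for `x > 0`.
-/

open Real

lemma Real.log_logb {b x : ℝ} (hx : log x ≠ 0) (hb : log b ≠ 0) :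
    log (logb b x) = log (log x) - log (log b) :=
  log_div hx hb

lemma log_one_add_exp_pos (z : ℝ) : 0 < log (1 + exp z) :=
  log_pos (lt_add_of_pos_right 1 (exp_pos z))

lemma log_one_add_exp_lt_exp (z : ℝ) : log (1 + exp z) < exp z := by
  have := log_lt_sub_one_of_pos (by positivity : 0 < 1 + exp z) (by simp [(exp_pos z).ne'])
  linarith

lemma hasDerivAt_one_add_exp (z : ℝ) : HasDerivAt (fun z => 1 + exp z) (exp z) z :=
  (hasDerivAt_exp z).const_add 1

lemma hasDerivAt_log_one_add_exp (z : ℝ) :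
    HasDerivAt (fun z => log (1 + exp z)) (exp z / (1 + exp z)) z :=
  (hasDerivAt_one_add_exp z).log (by positivity)

lemma hasDerivAt_exp_div_one_add_exp (z : ℝ) :
    HasDerivAt (fun z => exp z / (1 + exp z)) (exp z / (1 + exp z) ^ 2) z := by
  refine ((hasDerivAt_exp z).div (hasDerivAt_one_add_exp z) (by positivity)).congr_deriv ?_
  ring

lemma hasDerivAt_log_log_one_add_exp (z : ℝ) :
    HasDerivAt (fun z => log (log (1 + exp z))) (exp z / (1 + exp z) / log (1 + exp z)) z :=
  (hasDerivAt_log_one_add_exp z).log (log_one_add_exp_pos z).ne'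

lemma hasDerivAt_deriv_log_log_one_add_exp (z : ℝ) :
    HasDerivAt (fun z => exp z / (1 + exp z) / log (1 + exp z))
      (exp z * (log (1 + exp z) - exp z) / ((1 + exp z) ^ 2 * log (1 + exp z) ^ 2)) z := by
  refine ((hasDerivAt_exp_div_one_add_exp z).div (hasDerivAt_log_one_add_exp z)
    (log_one_add_exp_pos z).ne').congr_deriv ?_
  have : 0 < 1 + exp z := by positivity
  field_simp

lemma iteratedDeriv_two_log_log_one_add_exp (z : ℝ) :
    iteratedDeriv 2 (fun z => log (log (1 + exp z))) z
      = exp z * (log (1 + exp z) - exp z) / ((1 + exp z) ^ 2 * log (1 + exp z) ^ 2) := by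
  have hderiv : deriv (fun z => log (log (1 + exp z)))
      = fun z => exp z / (1 + exp z) / log (1 + exp z) :=
    funext fun z => (hasDerivAt_log_log_one_add_exp z).deriv
  rw [iteratedDeriv_succ, iteratedDeriv_one, hderiv]
  exact (hasDerivAt_deriv_log_log_one_add_exp z).deriv

lemma iteratedDeriv_two_log_log_one_add_exp_neg (z : ℝ) :
    iteratedDeriv 2 (fun z => log (log (1 + exp z))) z < 0 := by
  rw [iteratedDeriv_two_log_log_one_add_exp]
  exact div_neg_of_neg_of_pos
    (mul_neg_of_pos_of_neg (exp_pos z) (sub_neg.mpr (log_one_add_exp_lt_exp z)))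
    (by have := log_one_add_exp_pos z; positivity)

theorem stmt2 (g : ℝ → ℝ) (hg : g = fun z => Real.log (Real.logb 2 (1 + Real.exp z))) :
    StrictConcaveOn ℝ (Set.Iio (0 : ℝ)) g ∧
    ∀ z : ℝ, z < 0 → iteratedDeriv 2 g z < 0 := by
  have hg_eq : g = fun z => -log (log 2) + log (log (1 + exp z)) := by
    funext z
    simp only [hg]
    rw [log_logb (log_one_add_exp_pos z).ne' (log_pos one_lt_two).ne']
    ring
  have hg'' : ∀ z, iteratedDeriv 2 g z < 0 := fun z => by
    rw [hg_eq, iteratedDeriv_const_add two_pos]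
    exact iteratedDeriv_two_log_log_one_add_exp_neg z
  have hg_cont : Continuous g := by
    rw [hg_eq]
    exact continuous_const.add
      (continuous_iff_continuousAt.mpr fun z => (hasDerivAt_log_log_one_add_exp z).continuousAt)
  refine ⟨strictConcaveOn_of_deriv2_neg (convex_Iio 0) hg_cont.continuousOn fun z _ => ?_,
    fun z _ => hg'' z⟩
  rw [← iteratedDeriv_eq_iterate]
  exact hg'' z
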